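/- arXiv:2304.07562 — 4 statements merged into one kernel-verified Lean document; each statement's English description precedes it below -/
import Mathlib

section
/- For any ψ ∈ 𝒜, any t > 0, and any probability measures γ, γ̃ on ℝ^d with finite first moment, the ψ-distance satisfies 𝕎_ψ(γ, γ̃) ≤ √d · ψ(√t) · ‖γ − γ̃‖_var + (d·ψ(√t)/√t) · 𝕎₁(γ, γ̃). -/
open Set MeasureTheory

/-- Dual-type distance between measures induced by a class of test functions. -/
noncomputable def dualDist {E : Type*} [MeasurableSpace E]
    (S : Set (E → ℝ)) (μ ν : Measure E) : ℝ :=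
  sSup {x | ∃ f ∈ S, x = |(∫ y, f y ∂μ) - ∫ y, f y ∂ν|}

/-- The ψ-distance 𝕎_ψ. -/
noncomputable def Wpsi {E : Type*} [MeasurableSpace E] [NormedAddCommGroup E]
    (ψ : ℝ → ℝ) (μ ν : Measure E) : ℝ :=
  dualDist {f | ∀ x y, x ≠ y → |f x - f y| ≤ ψ ‖x - y‖} μ ν

/-- Total variation distance (sup over |f| ≤ 1). -/
noncomputable def varDist {E : Type*} [MeasurableSpace E] (μ ν : Measure E) : ℝ :=
  dualDist {f | Measurable f ∧ ∀ x, |f x| ≤ 1} μ ν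

/-- L¹-Wasserstein distance via Kantorovich duality. -/
noncomputable def W1 {E : Type*} [MeasurableSpace E] [NormedAddCommGroup E]
    (μ ν : Measure E) : ℝ :=
  dualDist {f | LipschitzWith 1 f} μ ν

/-!
Concavity and monotonicity give `ψ r ≤ ψ s + (ψ s / s) r` for all `r ≥ 0`, so with `s = √t` every
test function `f` of `𝕎_ψ` satisfies `|f x - f y| ≤ P + L ‖x - y‖` with `P = ψ s`, `L = ψ s / s`.
The inf-convolution `g x = ⨅ y, f y + L ‖x - y‖` is `L`-Lipschitz with `g ≤ f ≤ g + P`, so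
`f = g + (f - g)` splits into a part controlled by `L · 𝕎₁` and a part with values in `[0, P]`
controlled by `P · ‖μ - ν‖_var`. Since `1 ≤ √d ≤ d`, this is stronger than the claim.
-/

open scoped NNReal

lemma ConcaveOn.le_add_div_mul {ψ : ℝ → ℝ} (hconc : ConcaveOn ℝ (Ici 0) ψ)
    (hmono : MonotoneOn ψ (Ici 0)) (h0 : 0 ≤ ψ 0) {s r : ℝ} (hs : 0 < s) (hr : 0 ≤ r) :
    ψ r ≤ ψ s + ψ s / s * r := by
  have hψs : 0 ≤ ψ s := h0.trans (hmono self_mem_Ici hs.le hs.le)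
  rcases le_or_gt r s with hrs | hsr
  · have : 0 ≤ ψ s / s * r := by positivity
    linarith [hmono hr hs.le hrs]
  · have hslope : slope ψ 0 r ≤ slope ψ 0 s :=
      hconc.antitoneOn_slope_gt self_mem_Ici ⟨hs.le, hs⟩ ⟨hr, hs.trans hsr⟩ hsr.le
    rw [slope_def_field, slope_def_field, sub_zero, sub_zero,
      div_le_div_iff₀ (hs.trans hsr) hs] at hslope
    rw [div_mul_eq_mul_div, ← sub_le_iff_le_add', le_div_iff₀ hs]
    nlinarith [mul_le_mul_of_nonneg_left hsr.le h0]

lemma abs_sub_le_add_div_mul_dist {E : Type*} [SeminormedAddCommGroup E] {ψ : ℝ → ℝ}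
    (hconc : ConcaveOn ℝ (Ici 0) ψ) (hmono : MonotoneOn ψ (Ici 0)) (h0 : 0 ≤ ψ 0) {s : ℝ}
    (hs : 0 < s) {f : E → ℝ} (hf : ∀ x y, x ≠ y → |f x - f y| ≤ ψ ‖x - y‖) (x y : E) :
    |f x - f y| ≤ ψ s + ψ s / s * dist x y := by
  rcases eq_or_ne x y with rfl | hxy
  · simpa using h0.trans (hmono self_mem_Ici hs.le hs.le)
  · rw [dist_eq_norm]
    exact (hf x y hxy).trans (hconc.le_add_div_mul hmono h0 hs (norm_nonneg _))

theorem exists_lipschitzWith_le_le_add {α : Type*} [PseudoMetricSpace α] {f : α → ℝ} {P : ℝ}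
    {K : ℝ≥0} (hf : ∀ x y, f x ≤ f y + P + K * dist x y) :
    ∃ g : α → ℝ, LipschitzWith K g ∧ ∀ x, g x ≤ f x ∧ f x ≤ g x + P := by
  let g x := ⨅ y, f y + K * dist x y
  have hbdd : ∀ x, BddBelow (range fun y => f y + K * dist x y) := fun x =>
    ⟨f x - P, by rintro _ ⟨y, rfl⟩; linarith [hf x y]⟩
  refine ⟨g, LipschitzWith.of_le_add_mul K fun x x' => ?_, fun x => ⟨?_, ?_⟩⟩
  · have : Nonempty α := ⟨x⟩
    rw [← sub_le_iff_le_add]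
    refine le_ciInf fun y => ?_
    have htri := mul_le_mul_of_nonneg_left (dist_triangle x x' y) K.coe_nonneg
    linarith [ciInf_le (hbdd x) y]
  · simpa using ciInf_le (hbdd x) x
  · have : Nonempty α := ⟨x⟩
    rw [← sub_le_iff_le_add]
    exact le_ciInf fun y => by linarith [hf x y]

section DualDist

variable {E : Type*} [MeasurableSpace E] {μ ν : Measure E}

lemma dualDist_nonneg (S : Set (E → ℝ)) (μ ν : Measure E) : 0 ≤ dualDist S μ ν :=
  Real.sSup_nonneg <| by rintro _ ⟨f, -, rfl⟩; exact abs_nonneg _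

lemma varDist_nonneg (μ ν : Measure E) : 0 ≤ varDist μ ν :=
  dualDist_nonneg _ μ ν

lemma abs_integral_sub_le_mul_dualDist {S : Set (E → ℝ)} {C : ℝ}
    (hS : ∀ f ∈ S, |∫ x, f x ∂μ - ∫ x, f x ∂ν| ≤ C) {f : E → ℝ} {c : ℝ} (hc : 0 < c)
    (hf : (fun x => c⁻¹ * f x) ∈ S) :
    |∫ x, f x ∂μ - ∫ x, f x ∂ν| ≤ c * dualDist S μ ν := by
  have h : |∫ x, c⁻¹ * f x ∂μ - ∫ x, c⁻¹ * f x ∂ν| ≤ dualDist S μ ν :=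
    le_csSup ⟨C, by rintro _ ⟨g, hg, rfl⟩; exact hS g hg⟩ ⟨_, hf, rfl⟩
  rwa [integral_const_mul, integral_const_mul, ← mul_sub, abs_mul, abs_of_pos (inv_pos.2 hc),
    inv_mul_le_iff₀ hc] at h

lemma exists_lt_abs_integral_sub [IsProbabilityMeasure μ] {S : Set (E → ℝ)}
    (hS : ∀ f ∈ S, ∀ c : ℝ, (fun x => f x + c) ∈ S) {f : E → ℝ} (hf : f ∈ S)
    (hfμ : Integrable f μ) (hfν : ¬AEStronglyMeasurable f ν) (B : ℝ) :
    ∃ g ∈ S, B < |∫ x, g x ∂μ - ∫ x, g x ∂ν| := by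
  set c := |B| + |∫ x, f x ∂μ| + 1
  refine ⟨_, hS f hf c, ?_⟩
  have hν : ∫ x, f x + c ∂ν = 0 :=
    integral_undef fun hi => hfν (by simpa using hi.1.add_const (-c))
  rw [hν, integral_add hfμ (integrable_const c), integral_const, sub_zero, probReal_univ,
    one_smul]
  linarith [le_abs_self B, neg_abs_le (∫ x, f x ∂μ), le_abs_self ((∫ x, f x ∂μ) + c)]

/-- Test functions need not be measurable, and the Bochner integral of a non-integrable function
is `0`. A test function that is a.e.-strongly measurable for only one of the two measures, shifted by
large constants, makes the set in `dualDist` unbounded, and then its `sSup` is `0`. -/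
lemma dualDist_le_of_forall_aestronglyMeasurable [IsProbabilityMeasure μ]
    [IsProbabilityMeasure ν] {S : Set (E → ℝ)} {C : ℝ}
    (hS : ∀ f ∈ S, ∀ c : ℝ, (fun x => f x + c) ∈ S)
    (hSμ : ∀ f ∈ S, AEStronglyMeasurable f μ → Integrable f μ)
    (hSν : ∀ f ∈ S, AEStronglyMeasurable f ν → Integrable f ν) (hC : 0 ≤ C)
    (h : ∀ f ∈ S, AEStronglyMeasurable f μ → AEStronglyMeasurable f ν →
      |∫ x, f x ∂μ - ∫ x, f x ∂ν| ≤ C) :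
    dualDist S μ ν ≤ C := by
  rw [dualDist]
  by_cases hbdd : BddAbove {x | ∃ f ∈ S, x = |∫ y, f y ∂μ - ∫ y, f y ∂ν|}
  swap
  · rw [Real.sSup_of_not_bddAbove hbdd]
    exact hC
  obtain ⟨B, hB⟩ := hbdd
  refine Real.sSup_le ?_ hC
  rintro _ ⟨f, hf, rfl⟩
  by_cases hfμ : AEStronglyMeasurable f μ <;> by_cases hfν : AEStronglyMeasurable f ν
  · exact h f hf hfμ hfν
  · obtain ⟨g, hg, hBg⟩ := exists_lt_abs_integral_sub hS hf (hSμ f hf hfμ) hfν B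
    exact absurd (hB ⟨g, hg, rfl⟩) hBg.not_ge
  · obtain ⟨g, hg, hBg⟩ := exists_lt_abs_integral_sub hS hf (hSν f hf hfν) hfμ B
    rw [abs_sub_comm] at hBg
    exact absurd (hB ⟨g, hg, rfl⟩) hBg.not_ge
  · rw [integral_undef fun hi => hfμ hi.1, integral_undef fun hi => hfν hi.1, sub_zero,
      abs_zero]
    exact hC

lemma exists_measurable_abs_le_ae_eq {h : E → ℝ} {c : ℝ} (hμ : AEStronglyMeasurable h μ)
    (hν : AEStronglyMeasurable h ν) (hc : ∀ x, |h x| ≤ c) :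
    ∃ k : E → ℝ, Measurable k ∧ (∀ x, |k x| ≤ c) ∧ h =ᵐ[μ] k ∧ h =ᵐ[ν] k := by
  have hμν := aestronglyMeasurable_add_measure_iff.2 ⟨hμ, hν⟩
  have hclamp : ∀ x, h x = hμν.mk h x → h x = max (-c) (min c (hμν.mk h x)) := fun x hx => by
    rw [← hx, min_eq_right (abs_le.1 (hc x)).2, max_eq_right (abs_le.1 (hc x)).1]
  refine ⟨fun x => max (-c) (min c (hμν.mk h x)),
    measurable_const.max (measurable_const.min hμν.stronglyMeasurable_mk.measurable),
    fun x => abs_le.2 ⟨le_max_left _ _, max_le ?_ (min_le_left _ _)⟩,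
    (hμν.ae_eq_mk.filter_mono (ae_mono (Measure.le_add_right le_rfl))).mono hclamp,
    (hμν.ae_eq_mk.filter_mono (ae_mono (Measure.le_add_left le_rfl))).mono hclamp⟩
  linarith [(abs_nonneg _).trans (hc x)]

lemma abs_integral_sub_le_mul_varDist [IsProbabilityMeasure μ] [IsProbabilityMeasure ν]
    {h : E → ℝ} {c : ℝ} (hμ : AEStronglyMeasurable h μ) (hν : AEStronglyMeasurable h ν)
    (hc : ∀ x, |h x| ≤ c) :
    |∫ x, h x ∂μ - ∫ x, h x ∂ν| ≤ c * varDist μ ν := by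
  obtain ⟨k, hk, hkc, hμk, hνk⟩ := exists_measurable_abs_le_ae_eq hμ hν hc
  rw [integral_congr_ae hμk, integral_congr_ae hνk]
  obtain ⟨x₀⟩ := nonempty_of_isProbabilityMeasure μ
  rcases ((abs_nonneg _).trans (hc x₀)).eq_or_lt with rfl | hc₀
  · have hk₀ : k = 0 := funext fun x => abs_nonpos_iff.1 (hkc x)
    simp [hk₀]
  refine abs_integral_sub_le_mul_dualDist (C := 2) (fun f hf => ?_) hc₀
    ⟨hk.const_mul _, fun x => ?_⟩
  · have hbound : ∀ κ : Measure E, IsProbabilityMeasure κ → |∫ x, f x ∂κ| ≤ 1 := fun κ _ => by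
      simpa using norm_integral_le_of_norm_le_const (μ := κ) (f := f) (C := 1)
        (ae_of_all κ hf.2)
    linarith [abs_sub (∫ x, f x ∂μ) (∫ x, f x ∂ν), hbound μ ‹_›, hbound ν ‹_›]
  · rw [abs_mul, abs_inv, abs_of_pos hc₀, inv_mul_le_iff₀ hc₀, mul_one]
    exact hkc x

end DualDist

section NormedGroup

variable {E : Type*} [NormedAddCommGroup E] [MeasurableSpace E] {μ ν : Measure E}

lemma W1_nonneg (μ ν : Measure E) : 0 ≤ W1 μ ν :=
  dualDist_nonneg _ μ ν

lemma integrable_of_abs_sub_le_add_mul_norm [IsFiniteMeasure μ] {f : E → ℝ} {a b : ℝ}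
    (hf : AEStronglyMeasurable f μ) (hμ : Integrable (fun x => ‖x‖) μ)
    (hab : ∀ x, |f x - f 0| ≤ a + b * ‖x‖) : Integrable f μ := by
  refine ((integrable_const (|f 0| + a)).add (hμ.const_mul b)).mono' hf
    (ae_of_all _ fun x => ?_)
  rw [Real.norm_eq_abs, Pi.add_apply]
  linarith [abs_sub_abs_le_abs_sub (f x) (f 0), hab x]

variable [OpensMeasurableSpace E]

lemma LipschitzWith.integrable [IsFiniteMeasure μ] {g : E → ℝ} {K : ℝ≥0}
    (hg : LipschitzWith K g) (hμ : Integrable (fun x => ‖x‖) μ) : Integrable g μ :=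
  integrable_of_abs_sub_le_add_mul_norm (a := 0) hg.continuous.aestronglyMeasurable hμ
    fun x => by simpa [← Real.dist_eq] using hg.dist_le_mul x 0

lemma LipschitzWith.abs_integral_sub_le [IsProbabilityMeasure μ] {g : E → ℝ} {K : ℝ≥0}
    (hg : LipschitzWith K g) (hμ : Integrable (fun x => ‖x‖) μ) :
    |∫ x, g x ∂μ - g 0| ≤ K * ∫ x, ‖x‖ ∂μ := by
  have hsub : ∫ x, g x ∂μ - g 0 = ∫ x, (g x - g 0) ∂μ := by
    rw [integral_sub (hg.integrable hμ) (integrable_const _), integral_const, probReal_univ,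
      one_smul]
  rw [hsub, ← integral_const_mul, ← Real.norm_eq_abs]
  refine norm_integral_le_of_norm_le (hμ.const_mul _) (ae_of_all _ fun x => ?_)
  simpa [← Real.dist_eq] using hg.dist_le_mul x 0

variable [IsProbabilityMeasure μ] [IsProbabilityMeasure ν]

lemma abs_integral_sub_le_mul_W1 (hμ : Integrable (fun x => ‖x‖) μ)
    (hν : Integrable (fun x => ‖x‖) ν) {g : E → ℝ} {K : ℝ≥0} (hg : LipschitzWith K g) :
    |∫ x, g x ∂μ - ∫ x, g x ∂ν| ≤ K * W1 μ ν := by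
  rcases eq_zero_or_pos K with rfl | hK
  · have hμ0 := hg.abs_integral_sub_le hμ
    have hν0 := hg.abs_integral_sub_le hν
    simp only [NNReal.coe_zero, zero_mul, abs_nonpos_iff, sub_eq_zero] at hμ0 hν0 ⊢
    rw [hμ0, hν0]
  refine abs_integral_sub_le_mul_dualDist (C := (∫ x, ‖x‖ ∂μ) + ∫ x, ‖x‖ ∂ν)
    (fun f hf => ?_) hK ?_
  · have hfμ := hf.abs_integral_sub_le hμ
    have hfν := hf.abs_integral_sub_le hν
    simp only [NNReal.coe_one, one_mul] at hfμ hfν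
    calc |∫ x, f x ∂μ - ∫ x, f x ∂ν|
        = |(∫ x, f x ∂μ - f 0) - (∫ x, f x ∂ν - f 0)| := by ring_nf
      _ ≤ _ := (abs_sub _ _).trans (add_le_add hfμ hfν)
  · refine LipschitzWith.of_le_add_mul 1 fun x y => ?_
    have hxy := mul_le_mul_of_nonneg_left (hg.le_add_mul x y) (inv_nonneg.2 K.coe_nonneg)
    rw [mul_add, ← mul_assoc, inv_mul_cancel₀ (NNReal.coe_ne_zero.2 hK.ne')] at hxy
    simpa using hxy

theorem abs_integral_sub_le_mul_varDist_add_mul_W1 (hμ : Integrable (fun x => ‖x‖) μ)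
    (hν : Integrable (fun x => ‖x‖) ν) {f : E → ℝ} {P : ℝ} {K : ℝ≥0}
    (hfμ : AEStronglyMeasurable f μ) (hfν : AEStronglyMeasurable f ν)
    (hf : ∀ x y, |f x - f y| ≤ P + K * dist x y) :
    |∫ x, f x ∂μ - ∫ x, f x ∂ν| ≤ P * varDist μ ν + K * W1 μ ν := by
  obtain ⟨g, hg, hgf⟩ := exists_lipschitzWith_le_le_add (f := f) (P := P) (K := K)
    fun x y => by linarith [le_abs_self (f x - f y), hf x y]
  have hP : 0 ≤ P := by simpa using hf 0 0
  have hfg : ∀ x, |f x - g x| ≤ P := fun x =>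
    abs_le.2 ⟨by linarith [(hgf x).1], by linarith [(hgf x).2]⟩
  have hsplit : ∀ κ : Measure E, IsProbabilityMeasure κ → Integrable (fun x => ‖x‖) κ →
      AEStronglyMeasurable f κ → ∫ x, f x ∂κ = ∫ x, g x ∂κ + ∫ x, f x - g x ∂κ :=
    fun κ _ hκ hfκ => calc
      ∫ x, f x ∂κ = ∫ x, g x + (f x - g x) ∂κ := by simp only [add_sub_cancel]
      _ = _ := integral_add (hg.integrable hκ)
        (.of_bound (hfκ.sub hg.continuous.aestronglyMeasurable) P (ae_of_all _ hfg))
  calc |∫ x, f x ∂μ - ∫ x, f x ∂ν|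
      = |(∫ x, g x ∂μ - ∫ x, g x ∂ν) + (∫ x, f x - g x ∂μ - ∫ x, f x - g x ∂ν)| := by
        rw [hsplit μ ‹_› hμ hfμ, hsplit ν ‹_› hν hfν]; ring_nf
    _ ≤ K * W1 μ ν + P * varDist μ ν :=
        (abs_add_le _ _).trans <| add_le_add (abs_integral_sub_le_mul_W1 hμ hν hg)
          (abs_integral_sub_le_mul_varDist (hfμ.sub hg.continuous.aestronglyMeasurable)
            (hfν.sub hg.continuous.aestronglyMeasurable) hfg)
    _ = P * varDist μ ν + K * W1 μ ν := add_comm _ _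

end NormedGroup

theorem Wpsi_le_var_add_W1_general (d : ℕ) (hd : 1 ≤ d)
    (ψ : ℝ → ℝ)
    (hmono : MonotoneOn ψ (Ici 0))
    (hconc : ConcaveOn ℝ (Ici 0) ψ)
    (h0 : 0 ≤ ψ 0)
    (μ ν : Measure (EuclideanSpace ℝ (Fin d)))
    [IsProbabilityMeasure μ] [IsProbabilityMeasure ν]
    (hμ : Integrable (fun x => ‖x‖) μ) (hν : Integrable (fun x => ‖x‖) ν) :
    ∀ t > (0:ℝ),
      Wpsi ψ μ ν ≤ Real.sqrt d * ψ (Real.sqrt t) * varDist μ ν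
        + (d * ψ (Real.sqrt t) / Real.sqrt t) * W1 μ ν := by
  intro t ht
  set s := Real.sqrt t
  have hs : 0 < s := Real.sqrt_pos.2 ht
  have hψs : 0 ≤ ψ s := h0.trans (hmono self_mem_Ici hs.le hs.le)
  have hd₁ : (1 : ℝ) ≤ d := Nat.one_le_cast.2 hd
  have hvar := varDist_nonneg μ ν
  have hW1 := W1_nonneg μ ν
  refine dualDist_le_of_forall_aestronglyMeasurable
    (fun f hf c x y hxy => by simpa using hf x y hxy)
    (fun f hf hfμ => integrable_of_abs_sub_le_add_mul_norm hfμ hμ fun x => by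
      simpa using abs_sub_le_add_div_mul_dist hconc hmono h0 hs hf x 0)
    (fun f hf hfν => integrable_of_abs_sub_le_add_mul_norm hfν hν fun x => by
      simpa using abs_sub_le_add_div_mul_dist hconc hmono h0 hs hf x 0)
    (by positivity) fun f hf hfμ hfν => ?_
  calc |∫ x, f x ∂μ - ∫ x, f x ∂ν| ≤ ψ s * varDist μ ν + ψ s / s * W1 μ ν :=
        abs_integral_sub_le_mul_varDist_add_mul_W1 (K := ⟨ψ s / s, by positivity⟩) hμ hν hfμ hfν
          (abs_sub_le_add_div_mul_dist hconc hmono h0 hs hf)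
    _ ≤ Real.sqrt d * ψ s * varDist μ ν + d * ψ s / s * W1 μ ν := by
        gcongr
        · exact le_mul_of_one_le_left hψs (Real.one_le_sqrt.2 hd₁)
        · exact le_mul_of_one_le_left hψs hd₁

theorem Wpsi_le_var_add_W1 (d : ℕ) (hd : 1 ≤ d)
    (ψ : ℝ → ℝ)
    (hmono : MonotoneOn ψ (Ici 0))
    (hconc : ConcaveOn ℝ (Ici 0) ψ)
    (hpos : ∀ r > (0:ℝ), 0 < ψ r) (h0 : 0 ≤ ψ 0)
    (μ ν : Measure (EuclideanSpace ℝ (Fin d)))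
    [IsProbabilityMeasure μ] [IsProbabilityMeasure ν]
    (hμ : Integrable (fun x => ‖x‖) μ) (hν : Integrable (fun x => ‖x‖) ν) :
    ∀ t > (0:ℝ),
      Wpsi ψ μ ν ≤ Real.sqrt d * ψ (Real.sqrt t) * varDist μ ν
        + (d * ψ (Real.sqrt t) / Real.sqrt t) * W1 μ ν :=
  Wpsi_le_var_add_W1_general d hd ψ hmono hconc h0 μ ν hμ hν
end

section
/- Let ψ ∈ 𝒜. Then for every s > 0, ∫₀^s [ψ(r^{1/2})·ψ((s−r)^{1/2})/(r·√(s−r))] · (√s/ψ(√s)) dr ≤ 2(2+√2) ∫₀^{√(s/2)} ψ(r)/r dr. -/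
/-!
Split `(0, s)` at `s / 2`. On the left half, `ψ(√(s - r)) ≤ ψ(√s)` and `√s ≤ √2 √(s - r)` bound
the integrand by `√2 ψ(√r) / r`. On the right half, `ψ(√r) ≤ ψ(√s)` and `s ≤ 2r` bound it by
`2 ψ(√(s - r)) / (√s √(s - r))`. The substitution `r = u²` turns `∫₀^{s/2} ψ(√r) / r` into
`2 ∫₀^{√(s/2)} ψ(u) / u` and `∫₀^{s/2} ψ(√t) / √t` into `2 ∫₀^{√(s/2)} ψ(u)`, which is at most
`2 √s ∫₀^{√(s/2)} ψ(u) / u`.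

A non-integrable integrand has Bochner integral `0`, so the bounds above are only needed when the
integrand is integrable; then the Dini integral converges, because on `(0, s/2]` the integrand
dominates `ψ(√(s/2)) / ψ(√s) · ψ(√r) / r`.
-/

open Set MeasureTheory intervalIntegral

lemma image_sq_Ioo_zero {c : ℝ} (hc : 0 ≤ c) :
    (fun u : ℝ => u ^ 2) '' Ioo 0 c = Ioo 0 (c ^ 2) := by
  ext y
  constructor
  · rintro ⟨u, ⟨hu₀, huc⟩, rfl⟩
    exact ⟨by positivity, pow_lt_pow_left₀ huc hu₀.le two_ne_zero⟩
  · rintro ⟨hy₀, hyc⟩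
    refine ⟨√y, ⟨Real.sqrt_pos.2 hy₀, ?_⟩, Real.sq_sqrt hy₀.le⟩
    simpa [Real.sqrt_sq hc] using Real.sqrt_lt_sqrt hy₀.le hyc

lemma hasDerivWithinAt_sq (t : Set ℝ) :
    ∀ u ∈ t, HasDerivWithinAt (fun u : ℝ => u ^ 2) (2 * u) t u := fun u _ => by
  simpa using (hasDerivAt_pow 2 u).hasDerivWithinAt

lemma injOn_sq_Ioo {c : ℝ} : InjOn (fun u : ℝ => u ^ 2) (Ioo 0 c) :=
  (pow_left_strictMonoOn₀ two_ne_zero).injOn.mono fun _ hu => le_of_lt hu.1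

lemma integral_comp_sqrt {b : ℝ} (hb : 0 ≤ b) (g : ℝ → ℝ) :
    ∫ r in 0..b, g √r = ∫ u in 0..√b, 2 * u * g u := by
  have hsq := image_sq_Ioo_zero (Real.sqrt_nonneg b)
  rw [Real.sq_sqrt hb] at hsq
  rw [integral_of_le hb, integral_of_le (Real.sqrt_nonneg b), integral_Ioc_eq_integral_Ioo,
    integral_Ioc_eq_integral_Ioo, ← hsq,
    integral_image_eq_integral_abs_deriv_smul measurableSet_Ioo (hasDerivWithinAt_sq _)
      injOn_sq_Ioo]
  refine setIntegral_congr_fun measurableSet_Ioo fun u hu => ?_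
  rw [smul_eq_mul, abs_of_pos (by linarith [hu.1]), Real.sqrt_sq hu.1.le]

lemma intervalIntegrable_comp_sqrt_iff {b : ℝ} (hb : 0 ≤ b) (g : ℝ → ℝ) :
    IntervalIntegrable (fun r => g √r) volume 0 b ↔
      IntervalIntegrable (fun u => 2 * u * g u) volume 0 √b := by
  have hsq := image_sq_Ioo_zero (Real.sqrt_nonneg b)
  rw [Real.sq_sqrt hb] at hsq
  rw [intervalIntegrable_iff_integrableOn_Ioo_of_le hb,
    intervalIntegrable_iff_integrableOn_Ioo_of_le (Real.sqrt_nonneg b), ← hsq,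
    integrableOn_image_iff_integrableOn_abs_deriv_smul measurableSet_Ioo (hasDerivWithinAt_sq _)
      injOn_sq_Ioo]
  refine integrableOn_congr_fun (fun u hu => ?_) measurableSet_Ioo
  rw [smul_eq_mul, abs_of_pos (by linarith [hu.1]), Real.sqrt_sq hu.1.le]

lemma eqOn_comp_sqrt_div_id {b : ℝ} (hb : 0 ≤ b) (f : ℝ → ℝ) :
    EqOn (fun r => f √r / r) (fun r => (fun u => f u / u ^ 2) √r) (uIcc 0 b) := by
  intro r hr
  rw [uIcc_of_le hb] at hr
  simp only [Real.sq_sqrt hr.1]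

lemma two_mul_mul_div_sq (u y : ℝ) : 2 * u * (y / u ^ 2) = 2 * (y / u) := by
  rcases eq_or_ne u 0 with rfl | hu
  · simp
  · field_simp

lemma integral_comp_sqrt_div_id {b : ℝ} (hb : 0 ≤ b) (f : ℝ → ℝ) :
    ∫ r in 0..b, f √r / r = 2 * ∫ u in 0..√b, f u / u := by
  rw [integral_congr (eqOn_comp_sqrt_div_id hb f),
    integral_comp_sqrt hb (fun u => f u / u ^ 2), ← intervalIntegral.integral_const_mul]
  simp only [two_mul_mul_div_sq]

lemma intervalIntegrable_comp_sqrt_div_id_iff {b : ℝ} (hb : 0 ≤ b) (f : ℝ → ℝ) :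
    IntervalIntegrable (fun r => f √r / r) volume 0 b ↔
      IntervalIntegrable (fun u => f u / u) volume 0 √b := by
  rw [intervalIntegrable_congr ((eqOn_comp_sqrt_div_id hb f).mono Ioc_subset_Icc_self),
    intervalIntegrable_comp_sqrt_iff hb (fun u => f u / u ^ 2)]
  simp only [two_mul_mul_div_sq]
  exact ⟨fun h => by simpa using h.const_mul 2⁻¹, fun h => h.const_mul 2⟩

noncomputable def splitKernel (ψ : ℝ → ℝ) (s r : ℝ) : ℝ :=
  ψ √r * ψ √(s - r) / (r * √(s - r)) * (√s / ψ √s)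

section

variable {ψ : ℝ → ℝ} {s r : ℝ}

lemma splitKernel_eq_left :
    splitKernel ψ s r = ψ √r / r * (ψ √(s - r) / ψ √s) * (√s / √(s - r)) := by
  unfold splitKernel; ring

lemma splitKernel_eq_right :
    splitKernel ψ s r = ψ √r / ψ √s * (√s / r) * (ψ √(s - r) / √(s - r)) := by
  unfold splitKernel; ring

lemma splitKernel_le_left (hmono : MonotoneOn ψ (Ici 0)) (hpos : ∀ r > 0, 0 < ψ r)
    (hr : 0 < r) (hrs : r ≤ s / 2) :
    splitKernel ψ s r ≤ √2 * (ψ √r / r) := by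
  have hψs : 0 < ψ √s := hpos _ (Real.sqrt_pos.2 (by linarith))
  have hψ : ψ √(s - r) / ψ √s ≤ 1 :=
    div_le_one_of_le₀ (hmono (Real.sqrt_nonneg _) (Real.sqrt_nonneg _)
      (Real.sqrt_le_sqrt (by linarith))) hψs.le
  have hsqrt : √s / √(s - r) ≤ √2 := by
    rw [div_le_iff₀ (Real.sqrt_pos.2 (by linarith)), ← Real.sqrt_mul zero_le_two]
    exact Real.sqrt_le_sqrt (by linarith)
  have hψr : 0 ≤ ψ √r / r := div_nonneg (hpos _ (Real.sqrt_pos.2 hr)).le hr.le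
  have hψsr : 0 ≤ ψ √(s - r) / ψ √s :=
    div_nonneg (hpos _ (Real.sqrt_pos.2 (by linarith))).le hψs.le
  calc splitKernel ψ s r = ψ √r / r * (ψ √(s - r) / ψ √s) * (√s / √(s - r)) :=
        splitKernel_eq_left
    _ ≤ ψ √r / r * 1 * √2 := by gcongr
    _ = √2 * (ψ √r / r) := by ring

lemma le_splitKernel_left (hmono : MonotoneOn ψ (Ici 0)) (hpos : ∀ r > 0, 0 < ψ r)
    (hr : 0 < r) (hrs : r ≤ s / 2) :
    ψ √(s / 2) / ψ √s * (ψ √r / r) ≤ splitKernel ψ s r := by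
  have hψs : 0 < ψ √s := hpos _ (Real.sqrt_pos.2 (by linarith))
  have hψ : ψ √(s / 2) ≤ ψ √(s - r) :=
    hmono (Real.sqrt_nonneg _) (Real.sqrt_nonneg _) (Real.sqrt_le_sqrt (by linarith))
  have hsqrt : 1 ≤ √s / √(s - r) :=
    (one_le_div (Real.sqrt_pos.2 (by linarith))).2 (Real.sqrt_le_sqrt (by linarith))
  have hψr : 0 ≤ ψ √r / r := div_nonneg (hpos _ (Real.sqrt_pos.2 hr)).le hr.le
  have hψsr : 0 ≤ ψ √r / r * (ψ √(s - r) / ψ √s) :=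
    mul_nonneg hψr (div_nonneg (hpos _ (Real.sqrt_pos.2 (by linarith))).le hψs.le)
  calc ψ √(s / 2) / ψ √s * (ψ √r / r) = ψ √r / r * (ψ √(s / 2) / ψ √s) * 1 := by ring
    _ ≤ ψ √r / r * (ψ √(s - r) / ψ √s) * (√s / √(s - r)) := by gcongr
    _ = splitKernel ψ s r := splitKernel_eq_left.symm

lemma splitKernel_le_right (hmono : MonotoneOn ψ (Ici 0)) (hpos : ∀ r > 0, 0 < ψ r)
    (hsr : s / 2 ≤ r) (hrs : r < s) :
    splitKernel ψ s r ≤ 2 / √s * (ψ √(s - r) / √(s - r)) := by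
  have hs : 0 < √s := Real.sqrt_pos.2 (by linarith)
  have hψ : ψ √r / ψ √s ≤ 1 :=
    div_le_one_of_le₀ (hmono (Real.sqrt_nonneg _) (Real.sqrt_nonneg _)
      (Real.sqrt_le_sqrt hrs.le)) (hpos _ hs).le
  have hsqrt : √s / r ≤ 2 / √s := by
    rw [div_le_div_iff₀ (by linarith) hs, Real.mul_self_sqrt (by linarith)]
    linarith
  have hψr : 0 ≤ ψ √r / ψ √s :=
    div_nonneg (hpos _ (Real.sqrt_pos.2 (by linarith))).le (hpos _ hs).le
  have hsr : 0 ≤ √s / r := div_nonneg hs.le (by linarith)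
  have hψsr : 0 ≤ ψ √(s - r) / √(s - r) :=
    div_nonneg (hpos _ (Real.sqrt_pos.2 (by linarith))).le (Real.sqrt_nonneg _)
  calc splitKernel ψ s r = ψ √r / ψ √s * (√s / r) * (ψ √(s - r) / √(s - r)) :=
        splitKernel_eq_right
    _ ≤ 1 * (2 / √s) * (ψ √(s - r) / √(s - r)) := by gcongr
    _ = 2 / √s * (ψ √(s - r) / √(s - r)) := by ring

lemma intervalIntegrable_div_id_of_splitKernel (hmono : MonotoneOn ψ (Ici 0))
    (hpos : ∀ r > 0, 0 < ψ r) (hs : 0 < s)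
    (hF : IntervalIntegrable (splitKernel ψ s) volume 0 (s / 2)) :
    IntervalIntegrable (fun u => ψ u / u) volume 0 √(s / 2) := by
  have hc : 0 < ψ √(s / 2) / ψ √s :=
    div_pos (hpos _ (Real.sqrt_pos.2 (by linarith))) (hpos _ (Real.sqrt_pos.2 hs))
  have hmeas : Measurable fun r => ψ √r / r :=
    (Monotone.measurable fun _ _ h => hmono (Real.sqrt_nonneg _) (Real.sqrt_nonneg _)
      (Real.sqrt_le_sqrt h)).div measurable_id
  rw [← intervalIntegrable_comp_sqrt_div_id_iff (by linarith)]
  refine (hF.const_mul (ψ √(s / 2) / ψ √s)⁻¹).mono_fun' hmeas.aestronglyMeasurable ?_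
  rw [uIoc_of_le (by linarith), Filter.EventuallyLE, ae_restrict_iff' measurableSet_Ioc]
  refine Filter.Eventually.of_forall fun r hr => ?_
  rw [Real.norm_of_nonneg (div_nonneg (hpos _ (Real.sqrt_pos.2 hr.1)).le hr.1.le),
    le_inv_mul_iff₀ hc]
  exact le_splitKernel_left hmono hpos hr.1 hr.2

lemma integral_splitKernel_left_le (hmono : MonotoneOn ψ (Ici 0))
    (hpos : ∀ r > 0, 0 < ψ r) (hs : 0 < s)
    (hF : IntervalIntegrable (splitKernel ψ s) volume 0 (s / 2))
    (hdini : IntervalIntegrable (fun u => ψ u / u) volume 0 √(s / 2)) :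
    ∫ r in 0..s / 2, splitKernel ψ s r ≤ 2 * √2 * ∫ u in 0..√(s / 2), ψ u / u := by
  rw [← intervalIntegrable_comp_sqrt_div_id_iff (by linarith)] at hdini
  calc ∫ r in 0..s / 2, splitKernel ψ s r ≤ ∫ r in 0..s / 2, √2 * (ψ √r / r) :=
        integral_mono_on_of_le_Ioo (by linarith) hF (hdini.const_mul _)
          fun r hr => splitKernel_le_left hmono hpos hr.1 hr.2.le
    _ = 2 * √2 * ∫ u in 0..√(s / 2), ψ u / u := by
      rw [intervalIntegral.integral_const_mul, integral_comp_sqrt_div_id (by linarith)]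
      ring

lemma integral_splitKernel_right_le (hmono : MonotoneOn ψ (Ici 0))
    (hpos : ∀ r > 0, 0 < ψ r) (hs : 0 < s)
    (hF : IntervalIntegrable (splitKernel ψ s) volume (s / 2) s)
    (hdini : IntervalIntegrable (fun u => ψ u / u) volume 0 √(s / 2)) :
    ∫ r in s / 2..s, splitKernel ψ s r ≤ 4 * ∫ u in 0..√(s / 2), ψ u / u := by

  have hax : √(s / 2) ≤ √s := Real.sqrt_le_sqrt (by linarith)
  have hmul : IntervalIntegrable (fun u => 2 * u * (ψ u / u)) volume 0 √(s / 2) :=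
    hdini.continuousOn_mul (continuous_const.mul continuous_id).continuousOn
  have hG : IntervalIntegrable (fun t => ψ √t / √t) volume 0 (s / 2) :=
    (intervalIntegrable_comp_sqrt_iff (by linarith) (fun u => ψ u / u)).2 hmul
  have hG' :
      IntervalIntegrable (fun r => 2 / √s * (ψ √(s - r) / √(s - r))) volume (s / 2) s := by
    have := (hG.comp_sub_left s).symm.const_mul (2 / √s)
    rwa [sub_zero, show s - s / 2 = s / 2 by ring] at this
  calc ∫ r in s / 2..s, splitKernel ψ s r
      ≤ ∫ r in s / 2..s, 2 / √s * (ψ √(s - r) / √(s - r)) :=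
        integral_mono_on_of_le_Ioo (by linarith) hF hG'
          fun r hr => splitKernel_le_right hmono hpos hr.1.le hr.2
    _ = 2 / √s * ∫ t in 0..s / 2, ψ √t / √t := by
      rw [intervalIntegral.integral_const_mul, intervalIntegral.integral_comp_sub_left
        (fun t => ψ √t / √t), sub_self, show s - s / 2 = s / 2 by ring]
    _ = 2 / √s * ∫ u in 0..√(s / 2), 2 * u * (ψ u / u) := by
      rw [integral_comp_sqrt (by linarith) (fun u => ψ u / u)]
    _ ≤ 2 / √s * ∫ u in 0..√(s / 2), 2 * √s * (ψ u / u) := by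
      gcongr
      refine integral_mono_on_of_le_Ioo (Real.sqrt_nonneg _) hmul (hdini.const_mul _)
        fun u hu => ?_
      have := div_nonneg (hpos u hu.1).le hu.1.le
      gcongr
      linarith [hu.2]
    _ = 4 * ∫ u in 0..√(s / 2), ψ u / u := by
      rw [intervalIntegral.integral_const_mul]
      field_simp
      ring

end

theorem dini_splitting_estimate_general
    (ψ : ℝ → ℝ)
    (hmono : MonotoneOn ψ (Ici 0))
    (hpos : ∀ r > (0:ℝ), 0 < ψ r) :
    ∀ s > (0:ℝ),
      (∫ r in (0:ℝ)..s,
          ψ (Real.sqrt r) * ψ (Real.sqrt (s - r)) / (r * Real.sqrt (s - r))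
            * (Real.sqrt s / ψ (Real.sqrt s)))
        ≤ 2 * (2 + Real.sqrt 2) * ∫ r in (0:ℝ)..Real.sqrt (s / 2), ψ r / r := by
  intro s hs
  change ∫ r in 0..s, splitKernel ψ s r ≤ _
  by_cases hF : IntervalIntegrable (splitKernel ψ s) volume 0 s
  · have hmid : s / 2 ∈ uIcc 0 s := mem_uIcc_of_le (by linarith) (by linarith)
    have hF₁ := hF.mono_set (uIcc_subset_uIcc left_mem_uIcc hmid)
    have hF₂ := hF.mono_set (uIcc_subset_uIcc hmid right_mem_uIcc)
    have hdini := intervalIntegrable_div_id_of_splitKernel hmono hpos hs hF₁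
    rw [← intervalIntegral.integral_add_adjacent_intervals hF₁ hF₂]
    linarith [integral_splitKernel_left_le hmono hpos hs hF₁ hdini,
      integral_splitKernel_right_le hmono hpos hs hF₂ hdini]
  · have hI : 0 ≤ ∫ u in 0..√(s / 2), ψ u / u :=
      integral_nonneg (Real.sqrt_nonneg _) fun u hu => by
        rcases hu.1.eq_or_lt with rfl | hu₀
        · simp
        · exact div_nonneg (hpos u hu₀).le hu₀.le
    rw [intervalIntegral.integral_undef hF]
    positivity

theorem dini_splitting_estimate
    (ψ : ℝ → ℝ)
    (hmono : MonotoneOn ψ (Ici 0))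
    (hconc : ConcaveOn ℝ (Ici 0) ψ)
    (hpos : ∀ r > (0:ℝ), 0 < ψ r) (h0 : 0 ≤ ψ 0) :
    ∀ s > (0:ℝ),
      (∫ r in (0:ℝ)..s,
          ψ (Real.sqrt r) * ψ (Real.sqrt (s - r)) / (r * Real.sqrt (s - r))
            * (Real.sqrt s / ψ (Real.sqrt s)))
        ≤ 2 * (2 + Real.sqrt 2) * ∫ r in (0:ℝ)..Real.sqrt (s / 2), ψ r / r :=
  dini_splitting_estimate_general ψ hmono hpos
end

section
/- Let ψ ∈ 𝒜 and m ≥ 1. Then for every s > 0, (√s/ψ(√s)) · (∫₀^s [ψ((s−r)^{1/2})ψ(r^{1/2})/(√r·√(s−r))]^m dr)^{1/m} ≤ 2√2 · (∫₀^{s/2} [ψ(r^{1/2})/√r]^m dr)^{1/m}. -/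
open Set MeasureTheory

/-!
With `φ = ψ ∘ √` and `h t = φ t / √t`, the integrand is `h (s - r) * h r`, which is symmetric under
`r ↦ s - r`; so the integral over `[0, s]` is twice the one over `[0, s/2]`. There `s - r ∈ [s/2, s]`,
and monotonicity of `φ` gives `h (s - r) ≤ φ s / √(s/2) = √2 φ s / √s`. Taking `m`-th roots, the
factor `2 ^ (1/m) ≤ 2` remains.
-/

namespace intervalIntegral

theorem integral_eq_two_mul_integral_of_symm {f : ℝ → ℝ} {a b : ℝ}
    (hf : ∀ x, f (a + b - x) = f x) :
    ∫ x in a..b, f x = 2 * ∫ x in a..(a + b) / 2, f x := by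
  have hrefl : ∫ x in (a + b) / 2..b, f x = ∫ x in a..(a + b) / 2, f x := by
    have h := integral_comp_sub_left (a := a) (b := (a + b) / 2) f (a + b)
    simp only [hf] at h
    rw [h]
    congr 1 <;> ring
  by_cases hi : IntervalIntegrable f volume a ((a + b) / 2)
  · have hi' : IntervalIntegrable f volume ((a + b) / 2) b := by
      have h := hi.comp_sub_left (a + b)
      simp only [hf] at h
      convert h.symm using 1 <;> ring
    rw [← integral_add_adjacent_intervals hi hi', hrefl]
    ring
  · have hi' : ¬IntervalIntegrable f volume a b := fun h ↦
      hi (h.mono_set (uIcc_subset_uIcc_left (by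
        rw [mem_uIcc]
        rcases le_total a b with h | h <;> [left; right] <;> constructor <;> linarith)))
    rw [integral_undef hi, integral_undef hi', mul_zero]

/-- The reverse bound `g ≤ d * f` makes `g` non-integrable whenever `f` is, so that no
integrability hypothesis is needed. -/
theorem integral_le_mul_integral_of_comparable {f g : ℝ → ℝ} {a b c d : ℝ} (hab : a ≤ b)
    (hg : AEStronglyMeasurable g (volume.restrict (Ioc a b)))
    (hf0 : ∀ x ∈ Ioc a b, 0 ≤ f x) (hg0 : ∀ x ∈ Ioc a b, 0 ≤ g x)
    (hfg : ∀ x ∈ Ioc a b, f x ≤ c * g x) (hgf : ∀ x ∈ Ioc a b, g x ≤ d * f x) :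
    ∫ x in a..b, f x ≤ c * ∫ x in a..b, g x := by
  rw [integral_of_le hab, integral_of_le hab]
  by_cases hgi : IntegrableOn g (Ioc a b)
  · rw [← MeasureTheory.integral_const_mul]
    exact setIntegral_mono_of_nonneg hf0 hfg (hgi.const_mul c)
  · have hfi : ¬IntegrableOn f (Ioc a b) := fun hfi ↦ hgi <| (hfi.const_mul d).mono' hg <| by
      filter_upwards [ae_restrict_mem measurableSet_Ioc] with x hx
      rw [Real.norm_of_nonneg (hg0 x hx)]
      exact hgf x hx
    rw [MeasureTheory.integral_undef hfi, MeasureTheory.integral_undef hgi, mul_zero]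

end intervalIntegral

namespace LmSplitting

variable {φ : ℝ → ℝ} {s t m : ℝ}

lemma div_sqrt_nonneg (hφpos : ∀ r > 0, 0 < φ r) (t : ℝ) : 0 ≤ φ t / √t := by
  rcases le_or_gt t 0 with ht | ht
  · simp [Real.sqrt_eq_zero'.mpr ht]
  · exact div_nonneg (hφpos t ht).le (Real.sqrt_nonneg t)

lemma div_sqrt_le_of_half_le (hφ : Monotone φ) (hφpos : ∀ r > 0, 0 < φ r) (hs : 0 < s)
    (hst : s / 2 ≤ t) (hts : t ≤ s) : φ t / √t ≤ √2 * φ s / √s := calc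
  φ t / √t ≤ φ s / √(s / 2) :=
    div_le_div₀ (hφpos s hs).le (hφ hts) (Real.sqrt_pos.mpr (by linarith))
      (Real.sqrt_le_sqrt hst)
  _ = √2 * φ s / √s := by
    rw [Real.sqrt_div hs.le, div_div_eq_mul_div, mul_comm]

lemma div_sqrt_ge_of_half_le (hφ : Monotone φ) (hφpos : ∀ r > 0, 0 < φ r) (hs : 0 < s)
    (hst : s / 2 ≤ t) (hts : t ≤ s) : φ (s / 2) / √s ≤ φ t / √t :=
  div_le_div₀ (hφpos t (by linarith)).le (hφ hst) (Real.sqrt_pos.mpr (by linarith))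
    (Real.sqrt_le_sqrt hts)

lemma kernel_eq_mul (r : ℝ) :
    φ (s - r) * φ r / (√r * √(s - r)) = φ (s - r) / √(s - r) * (φ r / √r) := by
  rw [div_mul_div_comm, mul_comm √r]

lemma kernel_nonneg (hφpos : ∀ r > 0, 0 < φ r) (r : ℝ) :
    0 ≤ φ (s - r) * φ r / (√r * √(s - r)) := by
  rw [kernel_eq_mul]
  exact mul_nonneg (div_sqrt_nonneg hφpos _) (div_sqrt_nonneg hφpos _)

lemma kernel_symm (r : ℝ) :
    φ (s - (s - r)) * φ (s - r) / (√(s - r) * √(s - (s - r))) =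
      φ (s - r) * φ r / (√r * √(s - r)) := by
  rw [sub_sub_cancel, mul_comm (φ r), mul_comm √r]

lemma integral_kernel_rpow_le (hφ : Monotone φ) (hφpos : ∀ r > 0, 0 < φ r) (hs : 0 < s)
    (hm : 0 ≤ m) :
    ∫ r in (0:ℝ)..s, (φ (s - r) * φ r / (√r * √(s - r))) ^ m ≤
      2 * ((√2 * φ s / √s) ^ m * ∫ r in (0:ℝ)..(s / 2), (φ r / √r) ^ m) := by
  have hsymm := intervalIntegral.integral_eq_two_mul_integral_of_symm
    (f := fun r ↦ (φ (s - r) * φ r / (√r * √(s - r))) ^ m) (a := 0) (b := s)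
    (fun r ↦ by simp only [zero_add, kernel_symm])
  rw [hsymm, zero_add]
  refine mul_le_mul_of_nonneg_left ?_ zero_le_two
  have hmid {r : ℝ} (hr : r ∈ Ioc 0 (s / 2)) : s / 2 ≤ s - r ∧ s - r ≤ s :=
    ⟨by linarith [hr.2], by linarith [hr.1]⟩
  refine intervalIntegral.integral_le_mul_integral_of_comparable (d := (√s / φ (s / 2)) ^ m)
    (by linarith) ?_ (fun r _ ↦ Real.rpow_nonneg ?_ m)
    (fun r _ ↦ Real.rpow_nonneg (div_sqrt_nonneg hφpos r) m) (fun r hr ↦ ?_) (fun r hr ↦ ?_)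
  · exact ((hφ.measurable.div Real.continuous_sqrt.measurable).pow_const m).aestronglyMeasurable
  · exact kernel_nonneg hφpos r
  · rw [kernel_eq_mul, Real.mul_rpow (div_sqrt_nonneg hφpos _) (div_sqrt_nonneg hφpos _)]
    refine mul_le_mul_of_nonneg_right (Real.rpow_le_rpow (div_sqrt_nonneg hφpos _) ?_ hm)
      (Real.rpow_nonneg (div_sqrt_nonneg hφpos _) m)
    exact div_sqrt_le_of_half_le hφ hφpos hs (hmid hr).1 (hmid hr).2
  · have hD : 0 < √s / φ (s / 2) := div_pos (Real.sqrt_pos.mpr hs) (hφpos _ (by linarith))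
    have hA : 1 ≤ √s / φ (s / 2) * (φ (s - r) / √(s - r)) := by
      rw [← div_le_iff₀' hD, one_div_div]
      exact div_sqrt_ge_of_half_le hφ hφpos hs (hmid hr).1 (hmid hr).2
    rw [kernel_eq_mul, ← Real.mul_rpow hD.le
      (mul_nonneg (div_sqrt_nonneg hφpos _) (div_sqrt_nonneg hφpos _))]
    refine Real.rpow_le_rpow (div_sqrt_nonneg hφpos _) ?_ hm
    rw [← mul_assoc]
    exact le_mul_of_one_le_left (div_sqrt_nonneg hφpos _) hA

lemma sqrt_div_mul_integral_kernel_rpow_le (hφ : Monotone φ) (hφpos : ∀ r > 0, 0 < φ r)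
    (hs : 0 < s) (hm : 1 ≤ m) :
    √s / φ s * (∫ r in (0:ℝ)..s, (φ (s - r) * φ r / (√r * √(s - r))) ^ m) ^ (1 / m) ≤
      2 * √2 * (∫ r in (0:ℝ)..(s / 2), (φ r / √r) ^ m) ^ (1 / m) := by
  set I := ∫ r in (0:ℝ)..(s / 2), (φ r / √r) ^ m
  have hm0 : 0 < m := by linarith
  have hφs : 0 < φ s := hφpos s hs
  have hC : 0 ≤ √2 * φ s / √s := by positivity
  have hI : 0 ≤ I := intervalIntegral.integral_nonneg (by linarith)
    fun r _ ↦ Real.rpow_nonneg (div_sqrt_nonneg hφpos r) m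
  have hJ : 0 ≤ ∫ r in (0:ℝ)..s, (φ (s - r) * φ r / (√r * √(s - r))) ^ m :=
    intervalIntegral.integral_nonneg hs.le fun r _ ↦ Real.rpow_nonneg (kernel_nonneg hφpos r) m
  have h2 : (2 : ℝ) ^ (1 / m) ≤ 2 := by
    simpa using Real.rpow_le_rpow_of_exponent_le one_le_two ((div_le_one hm0).mpr hm)
  calc √s / φ s * (∫ r in (0:ℝ)..s, (φ (s - r) * φ r / (√r * √(s - r))) ^ m) ^ (1 / m)
      ≤ √s / φ s * (2 * ((√2 * φ s / √s) ^ m * I)) ^ (1 / m) := by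
        gcongr
        exact integral_kernel_rpow_le hφ hφpos hs hm0.le
    _ = 2 ^ (1 / m) * √2 * I ^ (1 / m) := by
        rw [Real.mul_rpow zero_le_two (by positivity), Real.mul_rpow (by positivity) hI,
          ← Real.rpow_mul hC, mul_one_div_cancel hm0.ne', Real.rpow_one]
        field_simp
    _ ≤ 2 * √2 * I ^ (1 / m) := by gcongr

end LmSplitting

theorem Lm_splitting_estimate_general
    (ψ : ℝ → ℝ)
    (hmono : MonotoneOn ψ (Ici 0))
    (hpos : ∀ r > (0:ℝ), 0 < ψ r)
    (m : ℝ) (hm : 1 ≤ m) :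
    ∀ s > (0:ℝ),
      (Real.sqrt s / ψ (Real.sqrt s)) *
        (∫ r in (0:ℝ)..s,
            (ψ (Real.sqrt (s - r)) * ψ (Real.sqrt r)
              / (Real.sqrt r * Real.sqrt (s - r))) ^ m) ^ (1 / m)
      ≤ 2 * Real.sqrt 2 *
        (∫ r in (0:ℝ)..(s / 2), (ψ (Real.sqrt r) / Real.sqrt r) ^ m) ^ (1 / m) := by
  intro s hs
  have hφ : Monotone (fun r ↦ ψ √r) := fun a b hab ↦
    hmono (Real.sqrt_nonneg a) (Real.sqrt_nonneg b) (Real.sqrt_le_sqrt hab)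
  exact LmSplitting.sqrt_div_mul_integral_kernel_rpow_le hφ
    (fun r hr ↦ hpos _ (Real.sqrt_pos.mpr hr)) hs hm

theorem Lm_splitting_estimate
    (ψ : ℝ → ℝ)
    (hmono : MonotoneOn ψ (Ici 0))
    (hconc : ConcaveOn ℝ (Ici 0) ψ)
    (hpos : ∀ r > (0:ℝ), 0 < ψ r) (h0 : 0 ≤ ψ 0)
    (m : ℝ) (hm : 1 ≤ m) :
    ∀ s > (0:ℝ),
      (Real.sqrt s / ψ (Real.sqrt s)) *
        (∫ r in (0:ℝ)..s,
            (ψ (Real.sqrt (s - r)) * ψ (Real.sqrt r)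
              / (Real.sqrt r * Real.sqrt (s - r))) ^ m) ^ (1 / m)
      ≤ 2 * Real.sqrt 2 *
        (∫ r in (0:ℝ)..(s / 2), (ψ (Real.sqrt r) / Real.sqrt r) ^ m) ^ (1 / m) :=
  Lm_splitting_estimate_general ψ hmono hpos m hm
end

section
/- Suppose two families of probability kernels satisfy the gradient estimate sup_{[f]_ψ ≤ 1} ‖∇P_{r,t}f‖_∞ ≤ c·(t−r)^{−1/2}·ψ((t−r)^{1/2}) for all 0 ≤ r < t ≤ T, and a density gradient bound ∫_{ℝ^d} |∇_y p_{s,r}(x,y)| dy ≤ C·(r−s)^{−1/2}. Then for bounded measurable coefficient differences A(r) := ‖a₁−a₂‖_{r,∞} and B(r) := ‖b₁−b₂‖_{r,∞} + ‖div(a₁−a₂)‖_{r,∞}, the duality term ∫_s^t [ψ((t−r)^{1/2})/√(t−r)]·(A(r)·C/√(r−s) + B(r)) dr bounds the pairing |∫_s^t ∫ p_{s,r}(x,y)(L_r^{1}−L_r^{2})P_{r,t}f(y) dy dr| for [f]_ψ ≤ 1, after integration by parts in the second-order term. -/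
/-!
At each time `r ∈ (s, t)` the integrand of the pairing is bounded pointwise by
`‖∇P_{r,t}f‖_∞ · (A(r) |∇_y p| + B(r) p)`. Integrating in `y`, the mass of `p` is one and the
`L¹` norm of `∇_y p` is at most `C (r - s)^{-1/2}`, which yields the integrand of the duality term
times `c`; integrating in `r` finishes the proof.
-/

open Set MeasureTheory RealInnerProductSpace

theorem Real.rpow_neg_half_eq_inv_sqrt {x : ℝ} (hx : 0 ≤ x) : x ^ (-(1 : ℝ) / 2) = (√x)⁻¹ := by
  rw [Real.sqrt_eq_rpow, ← Real.rpow_neg hx]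
  norm_num

section Pairing

variable {E : Type*} [NormedAddCommGroup E] [InnerProductSpace ℝ E]

theorem abs_inner_add_mul_inner_le {a : E →L[ℝ] E} {v w b g : E} {q A B M : ℝ}
    (hq : 0 ≤ q) (ha : ‖a‖ ≤ A) (hwb : ‖w‖ + ‖b‖ ≤ B) (hg : ‖g‖ ≤ M) :
    |⟪a v + q • w, g⟫ + q * ⟪b, g⟫| ≤ M * (A * ‖v‖ + B * q) := by
  have hav : ‖a v‖ ≤ A * ‖v‖ :=
    (a.le_opNorm v).trans (mul_le_mul_of_nonneg_right ha (norm_nonneg v))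
  have hcoef : 0 ≤ A * ‖v‖ + q * B :=
    add_nonneg ((norm_nonneg _).trans hav)
      (mul_nonneg hq ((add_nonneg (norm_nonneg w) (norm_nonneg b)).trans hwb))
  calc |⟪a v + q • w, g⟫ + q * ⟪b, g⟫|
      ≤ ‖a v + q • w‖ * ‖g‖ + q * (‖b‖ * ‖g‖) := by
        refine (abs_add_le _ _).trans (add_le_add (abs_real_inner_le_norm _ _) ?_)
        rw [abs_mul, abs_of_nonneg hq]
        exact mul_le_mul_of_nonneg_left (abs_real_inner_le_norm b g) hq
    _ ≤ (A * ‖v‖ + q * ‖w‖) * ‖g‖ + q * (‖b‖ * ‖g‖) := by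
        gcongr
        refine (norm_add_le _ _).trans (add_le_add hav ?_)
        rw [norm_smul, Real.norm_of_nonneg hq]
    _ = (A * ‖v‖ + q * (‖w‖ + ‖b‖)) * ‖g‖ := by ring
    _ ≤ (A * ‖v‖ + q * B) * M := by gcongr
    _ = M * (A * ‖v‖ + B * q) := by ring

variable {α : Type*} [MeasurableSpace α] {μ : Measure α}

theorem abs_integral_inner_add_mul_inner_le {a : α → E →L[ℝ] E} {v w b g : α → E} {q : α → ℝ}
    {A B M : ℝ} (hq : ∀ y, 0 ≤ q y) (hq_int : Integrable q μ) (hq_one : ∫ y, q y ∂μ = 1)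
    (hv_int : Integrable (fun y => ‖v y‖) μ) (ha : ∀ y, ‖a y‖ ≤ A)
    (hwb : ∀ y, ‖w y‖ + ‖b y‖ ≤ B) (hg : ∀ y, ‖g y‖ ≤ M) :
    |∫ y, (⟪a y (v y) + q y • w y, g y⟫ + q y * ⟪b y, g y⟫) ∂μ|
      ≤ M * (A * (∫ y, ‖v y‖ ∂μ) + B) := by
  have hAv := hv_int.const_mul A
  have hBq := hq_int.const_mul B
  rw [← Real.norm_eq_abs]
  calc _ ≤ ∫ y, M * (A * ‖v y‖ + B * q y) ∂μ := by
        refine norm_integral_le_of_norm_le ((hAv.add hBq).const_mul M) (ae_of_all _ fun y => ?_)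
        exact abs_inner_add_mul_inner_le (hq y) (ha y) (hwb y) (hg y)
    _ = M * (A * (∫ y, ‖v y‖ ∂μ) + B) := by
        rw [integral_const_mul, integral_add hAv hBq, integral_const_mul, integral_const_mul,
          hq_one, mul_one]

end Pairing

theorem abs_intervalIntegral_le_of_forall_Ioo {Φ g : ℝ → ℝ} {s t : ℝ} (hst : s ≤ t)
    (hΦ : ∀ r ∈ Ioo s t, |Φ r| ≤ g r) (hg : IntervalIntegrable g volume s t) :
    |∫ r in s..t, Φ r| ≤ ∫ r in s..t, g r := by
  rw [← Real.norm_eq_abs]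
  refine intervalIntegral.norm_integral_le_of_norm_le hst ?_ hg
  filter_upwards [Measure.ae_ne volume t] with r hrt hr
  exact hΦ r ⟨hr.1, lt_of_le_of_ne hr.2 hrt⟩

theorem pairing_duality_bound_general (d : ℕ)
    (ψ : ℝ → ℝ)
    (s t c C : ℝ) (hst : s < t)
    (A B : ℝ → ℝ)
    -- p = transition density p_{s,·}(x,·), Dp = ∇_y p, amap = a₁ - a₂,
    -- diva = div(a₁-a₂), bdiff = b₁ - b₂, G = ∇P_{·,t}f
    (p : ℝ → EuclideanSpace ℝ (Fin d) → ℝ)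
    (Dp : ℝ → EuclideanSpace ℝ (Fin d) → EuclideanSpace ℝ (Fin d))
    (amap : ℝ → EuclideanSpace ℝ (Fin d) →
      (EuclideanSpace ℝ (Fin d) →L[ℝ] EuclideanSpace ℝ (Fin d)))
    (diva bdiff : ℝ → EuclideanSpace ℝ (Fin d) → EuclideanSpace ℝ (Fin d))
    (G : ℝ → EuclideanSpace ℝ (Fin d) → EuclideanSpace ℝ (Fin d))
    (hp : ∀ r y, 0 ≤ p r y)
    (hpint : ∀ r ∈ Ioo s t, ∫ y, p r y = 1)
    (hpInt : ∀ r ∈ Ioo s t, Integrable (p r))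
    (hDpL1 : ∀ r ∈ Ioo s t, Integrable (fun y => ‖Dp r y‖))
    (hDp : ∀ r ∈ Ioo s t, (∫ y, ‖Dp r y‖) ≤ C * (r - s) ^ (-(1:ℝ)/2))
    -- gradient estimate sup_{[f]_ψ ≤ 1} ‖∇P_{r,t} f‖_∞ ≤ c (t-r)^{-1/2} ψ(√(t-r))
    (hG : ∀ r ∈ Ioo s t, ∀ y, ‖G r y‖ ≤ c * (t - r) ^ (-(1:ℝ)/2) * ψ (Real.sqrt (t - r)))
    (ha : ∀ r y, ‖amap r y‖ ≤ A r)
    (hbd : ∀ r y, ‖diva r y‖ + ‖bdiff r y‖ ≤ B r)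
    (Φ : ℝ → ℝ)
    -- the pairing ∫ p (L¹-L²)P_{r,t}f dy, rewritten by integration by parts
    (hΦ : ∀ r ∈ Ioo s t, Φ r =
      ∫ y, (⟪amap r y (Dp r y) + p r y • diva r y, G r y⟫
              + p r y * ⟪bdiff r y, G r y⟫))
    (hint2 : IntervalIntegrable
      (fun r => ψ (Real.sqrt (t - r)) / Real.sqrt (t - r)
        * (A r * C / Real.sqrt (r - s) + B r)) volume s t) :
    |∫ r in s..t, Φ r|
      ≤ c * ∫ r in s..t,
          ψ (Real.sqrt (t - r)) / Real.sqrt (t - r)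
            * (A r * C / Real.sqrt (r - s) + B r) := by
  have hΦ_le : ∀ r ∈ Ioo s t, |Φ r| ≤
      c * (ψ (Real.sqrt (t - r)) / Real.sqrt (t - r) * (A r * C / Real.sqrt (r - s) + B r)) := by
    intro r hr
    have hM : 0 ≤ c * (t - r) ^ (-(1:ℝ)/2) * ψ (Real.sqrt (t - r)) :=
      (norm_nonneg _).trans (hG r hr 0)
    have hA : 0 ≤ A r := (norm_nonneg _).trans (ha r 0)
    rw [hΦ r hr]
    calc _ ≤ c * (t - r) ^ (-(1:ℝ)/2) * ψ (Real.sqrt (t - r)) * (A r * (∫ y, ‖Dp r y‖) + B r) :=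
          abs_integral_inner_add_mul_inner_le (hp r) (hpInt r hr) (hpint r hr) (hDpL1 r hr)
            (ha r) (hbd r) (hG r hr)
      _ ≤ c * (t - r) ^ (-(1:ℝ)/2) * ψ (Real.sqrt (t - r)) * (A r * (C * (r - s) ^ (-(1:ℝ)/2))
            + B r) := by
          gcongr
          exact hDp r hr
      _ = _ := by
          rw [Real.rpow_neg_half_eq_inv_sqrt (sub_pos.2 hr.2).le,
            Real.rpow_neg_half_eq_inv_sqrt (sub_pos.2 hr.1).le]
          ring
  calc |∫ r in s..t, Φ r| ≤ ∫ r in s..t, c * (ψ (Real.sqrt (t - r)) / Real.sqrt (t - r)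
        * (A r * C / Real.sqrt (r - s) + B r)) :=
        abs_intervalIntegral_le_of_forall_Ioo hst.le hΦ_le (hint2.const_mul c)
    _ = _ := intervalIntegral.integral_const_mul _ _

/-- After integration by parts in the second-order term, the coefficient-difference
pairing between two generators, tested against the transition density and the
gradient of the semigroup, is bounded by the singular duality term. -/
theorem pairing_duality_bound (d : ℕ) (hd : 1 ≤ d)
    (ψ : ℝ → ℝ)
    (hmono : MonotoneOn ψ (Ici 0))
    (hconc : ConcaveOn ℝ (Ici 0) ψ)
    (hψpos : ∀ r > (0:ℝ), 0 < ψ r) (hψ0 : 0 ≤ ψ 0)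
    (s t c C : ℝ) (hst : s < t) (hc : 0 ≤ c) (hC : 0 ≤ C)
    (A B : ℝ → ℝ) (hA : ∀ r, 0 ≤ A r) (hB : ∀ r, 0 ≤ B r)
    -- p = transition density p_{s,·}(x,·), Dp = ∇_y p, amap = a₁ - a₂,
    -- diva = div(a₁-a₂), bdiff = b₁ - b₂, G = ∇P_{·,t}f
    (p : ℝ → EuclideanSpace ℝ (Fin d) → ℝ)
    (Dp : ℝ → EuclideanSpace ℝ (Fin d) → EuclideanSpace ℝ (Fin d))
    (amap : ℝ → EuclideanSpace ℝ (Fin d) →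
      (EuclideanSpace ℝ (Fin d) →L[ℝ] EuclideanSpace ℝ (Fin d)))
    (diva bdiff : ℝ → EuclideanSpace ℝ (Fin d) → EuclideanSpace ℝ (Fin d))
    (G : ℝ → EuclideanSpace ℝ (Fin d) → EuclideanSpace ℝ (Fin d))
    (hp : ∀ r y, 0 ≤ p r y)
    (hpint : ∀ r ∈ Ioo s t, ∫ y, p r y = 1)
    (hpInt : ∀ r ∈ Ioo s t, Integrable (p r))
    (hDpL1 : ∀ r ∈ Ioo s t, Integrable (fun y => ‖Dp r y‖))
    (hDp : ∀ r ∈ Ioo s t, (∫ y, ‖Dp r y‖) ≤ C * (r - s) ^ (-(1:ℝ)/2))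
    -- gradient estimate sup_{[f]_ψ ≤ 1} ‖∇P_{r,t} f‖_∞ ≤ c (t-r)^{-1/2} ψ(√(t-r))
    (hG : ∀ r ∈ Ioo s t, ∀ y, ‖G r y‖ ≤ c * (t - r) ^ (-(1:ℝ)/2) * ψ (Real.sqrt (t - r)))
    (ha : ∀ r y, ‖amap r y‖ ≤ A r)
    (hbd : ∀ r y, ‖diva r y‖ + ‖bdiff r y‖ ≤ B r)
    (Φ : ℝ → ℝ)
    -- the pairing ∫ p (L¹-L²)P_{r,t}f dy, rewritten by integration by parts
    (hΦ : ∀ r ∈ Ioo s t, Φ r =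
      ∫ y, (⟪amap r y (Dp r y) + p r y • diva r y, G r y⟫
              + p r y * ⟪bdiff r y, G r y⟫))
    (hΦint : IntervalIntegrable Φ volume s t)
    (hint2 : IntervalIntegrable
      (fun r => ψ (Real.sqrt (t - r)) / Real.sqrt (t - r)
        * (A r * C / Real.sqrt (r - s) + B r)) volume s t) :
    |∫ r in s..t, Φ r|
      ≤ c * ∫ r in s..t,
          ψ (Real.sqrt (t - r)) / Real.sqrt (t - r)
            * (A r * C / Real.sqrt (r - s) + B r) :=
  pairing_duality_bound_general d ψ s t c C hst A B p Dp amap diva bdiff G hp hpint hpInt hDpL1 hDp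
    hG ha hbd Φ hΦ hint2
end
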